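/- The function φ : ℝ → ℝ given by φ(ρ) = 6(1 − e^{−ρ})(−2 + ρ + (2 + ρ)e^{−ρ})/ρ⁴ for ρ ≠ 0 and φ(0) = 1 is strictly positive on all of ℝ. -/

import Mathlib

noncomputable def phi (ρ : ℝ) : ℝ :=
  if ρ = 0 then 1
  else 6 * (1 - Real.exp (-ρ)) * (-2 + ρ + (2 + ρ) * Real.exp (-ρ)) / ρ ^ 4

/-!
Both factors `1 - e^{-ρ}` and `g ρ = -2 + ρ + (2 + ρ) e^{-ρ}` of the numerator are strictly
increasing and vanish at `0`, so they have the sign of `ρ` and their product is positive for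
`ρ ≠ 0`. For `g` this follows from `g' ρ = 1 - (1 + ρ) e^{-ρ}`, which is positive away from `0`
because `1 + ρ < e^ρ`.
-/

lemma StrictMono.mul_pos_of_apply_eq_zero {α β : Type*} [LinearOrder α] [Ring β] [LinearOrder β]
    [IsStrictOrderedRing β] {f g : α → β} {a x : α} (hf : StrictMono f) (hg : StrictMono g)
    (hfa : f a = 0) (hga : g a = 0) (hx : x ≠ a) : 0 < f x * g x := by
  rcases hx.lt_or_gt with h | h
  · exact mul_pos_of_neg_of_neg (hfa ▸ hf h) (hga ▸ hg h)
  · exact mul_pos (hfa ▸ hf h) (hga ▸ hg h)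

lemma strictMono_of_hasDerivAt_pos_of_ne {f f' : ℝ → ℝ} {a : ℝ}
    (hf : ∀ x, HasDerivAt f (f' x) x) (hf' : ∀ x ≠ a, 0 < f' x) : StrictMono f := by
  have hcont : Continuous f := continuous_iff_continuousAt.2 fun x => (hf x).continuousAt
  refine StrictMonoOn.Iic_union_Ici (a := a) ?_ ?_
  · refine strictMonoOn_of_hasDerivWithinAt_pos (convex_Iic a) hcont.continuousOn
      (fun x _ => (hf x).hasDerivWithinAt) fun x hx => hf' x ?_
    rw [interior_Iic] at hx
    exact hx.ne
  · refine strictMonoOn_of_hasDerivWithinAt_pos (convex_Ici a) hcont.continuousOn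
      (fun x _ => (hf x).hasDerivWithinAt) fun x hx => hf' x ?_
    rw [interior_Ici] at hx
    exact hx.ne'

lemma strictMono_one_sub_exp_neg : StrictMono fun x : ℝ => 1 - Real.exp (-x) :=
  fun _ _ h => sub_lt_sub_left (Real.exp_lt_exp.2 (neg_lt_neg h)) 1

lemma hasDerivAt_neg_two_add_add_mul_exp_neg (x : ℝ) :
    HasDerivAt (fun x : ℝ => -2 + x + (2 + x) * Real.exp (-x))
      (1 - (1 + x) * Real.exp (-x)) x := by
  have hexp : HasDerivAt (fun x : ℝ => Real.exp (-x)) (-Real.exp (-x)) x := by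
    simpa using (hasDerivAt_neg x).exp
  refine (((hasDerivAt_id' x).const_add (-2)).add
    (((hasDerivAt_id' x).const_add 2).mul hexp)).congr_deriv ?_
  ring

lemma one_add_mul_exp_neg_lt_one {x : ℝ} (hx : x ≠ 0) : (1 + x) * Real.exp (-x) < 1 :=
  calc (1 + x) * Real.exp (-x) < Real.exp x * Real.exp (-x) :=
        mul_lt_mul_of_pos_right (by linarith [Real.add_one_lt_exp hx]) (Real.exp_pos _)
    _ = 1 := by rw [← Real.exp_add, add_neg_cancel, Real.exp_zero]

lemma strictMono_neg_two_add_add_mul_exp_neg :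
    StrictMono fun x : ℝ => -2 + x + (2 + x) * Real.exp (-x) :=
  strictMono_of_hasDerivAt_pos_of_ne (a := 0) hasDerivAt_neg_two_add_add_mul_exp_neg
    fun _ hx => sub_pos.2 (one_add_mul_exp_neg_lt_one hx)

theorem stmt_5 (ρ : ℝ) : 0 < phi ρ := by
  unfold phi
  split_ifs with hρ
  · exact one_pos
  have hnum : 0 < (1 - Real.exp (-ρ)) * (-2 + ρ + (2 + ρ) * Real.exp (-ρ)) :=
    strictMono_one_sub_exp_neg.mul_pos_of_apply_eq_zero strictMono_neg_two_add_add_mul_exp_neg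
      (by simp) (by simp) hρ
  rw [mul_assoc]
  exact div_pos (mul_pos (by norm_num) hnum) (by positivity)
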